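/- arXiv:1211.1716 — 4 statements merged into one kernel-verified Lean document; each statement's English description precedes it below -/
import Mathlib

section
/- In the ICA model, for every unit vector u ∈ ℝ^n, the kurtosis of the projection of the observed variable is unaffected by the Gaussian noise: κ4(u · X) = κ4(u · (AS)) = κ4((Aᵀu) · S) = Σ_{i=1}^n (Aᵀu)_i^4 κ4(S_i). -/
/-!
The fourth cumulant is additive over independent zero-mean summands and homogeneous of degree
four; since `u ⬝ᵥ A *ᵥ s = (Aᵀ *ᵥ u) ⬝ᵥ s`, this gives the formula for the signal part. The noise
term `u ⬝ᵥ η` is independent of the signal and centered Gaussian, and a centered Gaussian has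
vanishing fourth cumulant: for independent `Z, Z' ∼ N(0, v)`, both `Z + Z'` and `√2 Z` have law
`N(0, 2v)`, so additivity and homogeneity give `2 κ₄ = 4 κ₄`.
-/

open MeasureTheory ProbabilityTheory Matrix

/-- Fourth cross-cumulant of a zero-mean random vector. -/
noncomputable def cum4 {Ω : Type*} [MeasurableSpace Ω] (μ : Measure Ω) {n : ℕ}
    (W : Ω → Fin n → ℝ) (i j k l : Fin n) : ℝ :=
  (∫ ω, W ω i * W ω j * W ω k * W ω l ∂μ)
    - (∫ ω, W ω i * W ω j ∂μ) * (∫ ω, W ω k * W ω l ∂μ)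
    - (∫ ω, W ω i * W ω k ∂μ) * (∫ ω, W ω j * W ω l ∂μ)
    - (∫ ω, W ω i * W ω l ∂μ) * (∫ ω, W ω j * W ω k ∂μ)

/-- Action of a fourth-order tensor on a matrix: `(Q ∘ M)_{ij} = ∑_{k,l} Q_{ijkl} M_{lk}`. -/
noncomputable def tensorOp {n : ℕ} (Q : Fin n → Fin n → Fin n → Fin n → ℝ)
    (M : Matrix (Fin n) (Fin n) ℝ) : Matrix (Fin n) (Fin n) ℝ :=
  fun i j => ∑ k, ∑ l, Q i j k l * M l k

/-- Fourth cumulant (kurtosis) of a zero-mean real random variable. -/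
noncomputable def kappa4 {Ω : Type*} [MeasurableSpace Ω] (μ : Measure Ω) (X : Ω → ℝ) : ℝ :=
  (∫ ω, (X ω) ^ 4 ∂μ) - 3 * (∫ ω, (X ω) ^ 2 ∂μ) ^ 2

/-- A zero-mean Gaussian random vector: every linear functional of it is a
centered Gaussian random variable. -/
def IsCenteredGaussianVector {Ω : Type*} [MeasurableSpace Ω] (μ : Measure Ω) {n : ℕ}
    (η : Ω → Fin n → ℝ) : Prop :=
  ∀ u : Fin n → ℝ, ∃ v : NNReal,
    Measure.map (fun ω => ∑ i, u i * η ω i) μ = gaussianReal 0 v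

/-- The spectral (ℓ² operator) norm of a matrix. -/
noncomputable def spec {n : ℕ} (M : Matrix (Fin n) (Fin n) ℝ) : ℝ :=
  ‖LinearMap.toContinuousLinearMap (Matrix.toEuclideanLin M)‖

/-- The Frobenius norm of a matrix. -/
noncomputable def frob {n : ℕ} (M : Matrix (Fin n) (Fin n) ℝ) : ℝ :=
  Real.sqrt (∑ i, ∑ j, (M i j) ^ 2)

/-- Euclidean norm of the q-th column of a matrix. -/
noncomputable def colNorm {n : ℕ} (A : Matrix (Fin n) (Fin n) ℝ) (q : Fin n) : ℝ :=
  Real.sqrt (∑ i, (A i q) ^ 2)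

/-- weight function of the fourth k-statistic: depends only on the number of
distinct indices. -/
noncomputable def kphi (N : ℕ) (r s t u : Fin N) : ℝ :=
  match ({r, s, t, u} : Finset (Fin N)).card with
  | 1 => 1
  | 2 => -1 / ((N : ℝ) - 1)
  | 3 => 2 / (((N : ℝ) - 1) * ((N : ℝ) - 2))
  | _ => -6 / (((N : ℝ) - 1) * ((N : ℝ) - 2) * ((N : ℝ) - 3))

/-- The fourth k-statistic of four sample sequences of length `N`. -/
noncomputable def kstat {N : ℕ} (y₁ y₂ y₃ y₄ : Fin N → ℝ) : ℝ :=
  (1 / (N : ℝ)) * ∑ r, ∑ s, ∑ t, ∑ u, kphi N r s t u * y₁ r * y₂ s * y₃ t * y₄ u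

open scoped NNReal ENNReal

section Kurtosis

variable {Ω : Type*} [MeasurableSpace Ω] {μ : Measure Ω}

lemma MeasureTheory.MemLp.integrable_pow_of_le [IsFiniteMeasure μ] {f : Ω → ℝ} {n m : ℕ}
    (hf : MemLp f n μ) (hm : m ≤ n) : Integrable (fun ω => f ω ^ m) μ :=
  (hf.mono_exponent (by exact_mod_cast hm)).integrable_norm_pow'.mono'
    (hf.aestronglyMeasurable.pow m) (Filter.Eventually.of_forall fun ω => (norm_pow _ _).le)

theorem integral_add_pow_of_indepFun [IsProbabilityMeasure μ] {T Z : Ω → ℝ} {n : ℕ}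
    (hTZ : IndepFun T Z μ) (hT : MemLp T n μ) (hZ : MemLp Z n μ) :
    ∫ ω, (T ω + Z ω) ^ n ∂μ = ∑ m ∈ Finset.range (n + 1),
      (∫ ω, T ω ^ m ∂μ) * (∫ ω, Z ω ^ (n - m) ∂μ) * n.choose m := by
  have hmoment : ∀ m ∈ Finset.range (n + 1),
      ∫ ω, T ω ^ m * Z ω ^ (n - m) ∂μ = (∫ ω, T ω ^ m ∂μ) * ∫ ω, Z ω ^ (n - m) ∂μ := by
    intro m hm
    exact (hTZ.comp (measurable_id.pow_const m) (measurable_id.pow_const (n - m)))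
      |>.integral_fun_mul_eq_mul_integral
        (hT.integrable_pow_of_le (Finset.mem_range_succ_iff.1 hm)).aestronglyMeasurable
        (hZ.integrable_pow_of_le (Nat.sub_le n m)).aestronglyMeasurable
  have hint : ∀ m ∈ Finset.range (n + 1),
      Integrable (fun ω => T ω ^ m * Z ω ^ (n - m) * n.choose m) μ := by
    intro m hm
    refine Integrable.mul_const ?_ _
    exact (hTZ.comp (measurable_id.pow_const m) (measurable_id.pow_const (n - m))).integrable_mul
      (hT.integrable_pow_of_le (Finset.mem_range_succ_iff.1 hm))
      (hZ.integrable_pow_of_le (Nat.sub_le n m))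
  simp_rw [add_pow]
  rw [integral_finsetSum _ hint]
  refine Finset.sum_congr rfl fun m hm => ?_
  rw [integral_mul_const, hmoment m hm]

lemma kappa4_const_mul (c : ℝ) (X : Ω → ℝ) :
    kappa4 μ (fun ω => c * X ω) = c ^ 4 * kappa4 μ X := by
  simp only [kappa4, mul_pow, integral_const_mul]
  ring

theorem kappa4_add_of_indepFun [IsProbabilityMeasure μ] {T Z : Ω → ℝ} (hTZ : IndepFun T Z μ)
    (hT : MemLp T 4 μ) (hZ : MemLp Z 4 μ) (hT0 : ∫ ω, T ω ∂μ = 0) (hZ0 : ∫ ω, Z ω ∂μ = 0) :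
    kappa4 μ (fun ω => T ω + Z ω) = kappa4 μ T + kappa4 μ Z := by
  have h2 := integral_add_pow_of_indepFun (n := 2) hTZ
    (hT.mono_exponent (by norm_num)) (hZ.mono_exponent (by norm_num))
  have h4 := integral_add_pow_of_indepFun (n := 4) hTZ hT hZ
  simp only [Nat.reduceAdd, Finset.sum_range_succ, Finset.range_one, Finset.sum_singleton, pow_zero,
    integral_const, probReal_univ, smul_eq_mul, mul_one, tsub_zero, one_mul, Nat.choose, Nat.cast_one,
    pow_one, hT0, Nat.add_one_sub_one, hZ0, mul_zero, add_zero, Nat.cast_ofNat, zero_mul, tsub_self,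
    Nat.reduceSub] at h2 h4
  simp only [kappa4, h2, h4]
  ring

section WeightedSum

variable {ι : Type*} {S : ι → Ω → ℝ}

lemma integral_sum_mul_eq_zero (hS : ∀ i, Integrable (S i) μ) (hS0 : ∀ i, ∫ ω, S i ω ∂μ = 0)
    (w : ι → ℝ) (s : Finset ι) : ∫ ω, ∑ i ∈ s, w i * S i ω ∂μ = 0 := by
  rw [integral_finsetSum s fun i _ => (hS i).const_mul (w i)]
  simp [integral_const_mul, hS0]

theorem kappa4_sum_mul_of_iIndepFun [IsProbabilityMeasure μ] (hS : ∀ i, MemLp (S i) 4 μ)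
    (hS0 : ∀ i, ∫ ω, S i ω ∂μ = 0) (hind : iIndepFun S μ) (w : ι → ℝ) (s : Finset ι) :
    kappa4 μ (fun ω => ∑ i ∈ s, w i * S i ω) = ∑ i ∈ s, w i ^ 4 * kappa4 μ (S i) := by
  classical
  induction s using Finset.induction_on with
  | empty => simp [kappa4]
  | insert a s ha ih =>
    have hindep : IndepFun (fun ω => ∑ i ∈ s, w i * S i ω) (fun ω => w a * S a ω) μ := by
      convert (hind.comp (fun i x => w i * x) fun i => measurable_id.const_mul (w i))
        |>.indepFun_finsetSum_of_notMem₀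
          (fun i => (hS i).aestronglyMeasurable.aemeasurable.const_mul (w i)) ha using 1
      · ext ω
        simp
      · rfl
    have hsum : MemLp (fun ω => ∑ i ∈ s, w i * S i ω) 4 μ :=
      memLp_finsetSum s fun i _ => (hS i).const_mul (w i)
    simp_rw [Finset.sum_insert ha, add_comm (w a * _)]
    rw [kappa4_add_of_indepFun hindep hsum ((hS a).const_mul (w a))
      (integral_sum_mul_eq_zero (fun i => (hS i).integrable (by norm_num)) hS0 w s)
      (by rw [integral_const_mul, hS0, mul_zero]), ih, kappa4_const_mul]
    ring

end WeightedSum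

end Kurtosis

section Gaussian

variable {Ω : Type*} [MeasurableSpace Ω] {μ : Measure Ω}

lemma ProbabilityTheory.HasLaw.kappa4_eq {X : Ω → ℝ} {ν : Measure ℝ} (hX : HasLaw X ν μ) :
    kappa4 μ X = kappa4 ν id := by
  simp only [kappa4, id]
  rw [← hX.integral_comp (f := fun x => x ^ 4) (by fun_prop),
    ← hX.integral_comp (f := fun x => x ^ 2) (by fun_prop)]
  rfl

lemma ProbabilityTheory.HasLaw.memLp_of_gaussianReal {X : Ω → ℝ} {m : ℝ} {v : ℝ≥0}
    (hX : HasLaw X (gaussianReal m v) μ) {p : ℝ≥0∞} (hp : p ≠ ∞) : MemLp X p μ := by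
  have h := memLp_id_gaussianReal' (μ := m) (v := v) p hp
  rw [← hX.map_eq] at h
  exact (memLp_map_measure_iff aestronglyMeasurable_id hX.aemeasurable).1 h

lemma ProbabilityTheory.HasLaw.integral_eq_zero_of_gaussianReal {X : Ω → ℝ} {v : ℝ≥0}
    (hX : HasLaw X (gaussianReal 0 v) μ) : ∫ ω, X ω ∂μ = 0 := by
  rw [hX.integral_eq, integral_id_gaussianReal]

theorem kappa4_gaussianReal (v : ℝ≥0) : kappa4 (gaussianReal 0 v) id = 0 := by
  obtain ⟨Ω, _, P, Z, -, hlaw, hind, _⟩ := exists_iid (Fin 2) (gaussianReal 0 v)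
  have hind01 : IndepFun (Z 0) (Z 1) P := hind.indepFun (by decide)
  have hsum : HasLaw (fun ω => Z 0 ω + Z 1 ω) (gaussianReal 0 (v + v)) P := by
    simpa [gaussianReal_conv_gaussianReal] using hind01.hasLaw_fun_add (hlaw 0) (hlaw 1)
  have hscale : HasLaw (fun ω => √2 * Z 0 ω) (gaussianReal 0 (v + v)) P := by
    convert gaussianReal_const_mul (hlaw 0) √2 using 2
    · simp
    · ext; simp; ring
  have hadd := kappa4_add_of_indepFun hind01 ((hlaw 0).memLp_of_gaussianReal (by simp))
    ((hlaw 1).memLp_of_gaussianReal (by simp)) (hlaw 0).integral_eq_zero_of_gaussianReal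
    (hlaw 1).integral_eq_zero_of_gaussianReal
  rw [hsum.kappa4_eq, ← hscale.kappa4_eq, kappa4_const_mul, (hlaw 0).kappa4_eq,
    (hlaw 1).kappa4_eq] at hadd
  have hsqrt : (√2 : ℝ) ^ 4 = 4 := by
    rw [show 4 = 2 * 2 from rfl, pow_mul, Real.sq_sqrt zero_le_two]
    norm_num
  rw [hsqrt] at hadd
  linarith

end Gaussian

theorem kappa4_projection_noise_invariant_general
    {Ω : Type*} [MeasurableSpace Ω] (μ : Measure Ω) [IsProbabilityMeasure μ] {n : ℕ}
    (A : Matrix (Fin n) (Fin n) ℝ)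
    (S η X : Ω → Fin n → ℝ)
    (hSmean : ∀ i, ∫ ω, S ω i ∂μ = 0)
    (hSmom : ∀ i, MemLp (fun ω => S ω i) 4 μ)
    (hSind : iIndepFun (fun i ω => S ω i) μ)
    (hηGauss : IsCenteredGaussianVector μ η)
    (hSη : IndepFun S η μ)
    (hX : ∀ ω, X ω = A.mulVec (S ω) + η ω)
    (u : Fin n → ℝ) :
    kappa4 μ (fun ω => ∑ i, u i * X ω i)
        = kappa4 μ (fun ω => ∑ i, u i * A.mulVec (S ω) i) ∧
    kappa4 μ (fun ω => ∑ i, u i * A.mulVec (S ω) i)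
        = kappa4 μ (fun ω => ∑ i, Aᵀ.mulVec u i * S ω i) ∧
    kappa4 μ (fun ω => ∑ i, Aᵀ.mulVec u i * S ω i)
        = ∑ i, (Aᵀ.mulVec u i) ^ 4 * kappa4 μ (fun ω => S ω i) := by
  have hproj : ∀ s, ∑ i, u i * A.mulVec s i = ∑ i, Aᵀ.mulVec u i * s i := fun s => by
    change u ⬝ᵥ A *ᵥ s = Aᵀ *ᵥ u ⬝ᵥ s
    rw [dotProduct_mulVec, mulVec_transpose]
  obtain ⟨v, hv⟩ := hηGauss u
  have hnoise : HasLaw (fun ω => ∑ i, u i * η ω i) (gaussianReal 0 v) μ :=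
    ⟨.of_map_ne_zero (by simp [hv, NeZero.ne]), hv⟩
  have hindep : IndepFun (fun ω => ∑ i, Aᵀ.mulVec u i * S ω i) (fun ω => ∑ i, u i * η ω i) μ :=
    hSη.comp (φ := fun s : Fin n → ℝ => ∑ i, Aᵀ.mulVec u i * s i)
      (ψ := fun e : Fin n → ℝ => ∑ i, u i * e i) (by fun_prop) (by fun_prop)
  have hsplit : (fun ω => ∑ i, u i * X ω i)
      = fun ω => (∑ i, Aᵀ.mulVec u i * S ω i) + ∑ i, u i * η ω i := by
    ext ω
    rw [hX ω, ← hproj, ← Finset.sum_add_distrib]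
    simp [mul_add]
  refine ⟨?_, by simp_rw [hproj], kappa4_sum_mul_of_iIndepFun hSmom hSmean hSind _ _⟩
  rw [hsplit, kappa4_add_of_indepFun hindep (memLp_finsetSum _ fun i _ => (hSmom i).const_mul _)
    (hnoise.memLp_of_gaussianReal (by simp))
    (integral_sum_mul_eq_zero (fun i => (hSmom i).integrable (by norm_num)) hSmean _ _)
    hnoise.integral_eq_zero_of_gaussianReal, hnoise.kappa4_eq, kappa4_gaussianReal, add_zero]
  simp_rw [hproj]

/-- in the ICA model $X = AS + η$, for every unit vector $u$ the
kurtosis of the projection $u ⋅ X$ is unaffected by the Gaussian noise: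
$κ_4(u⋅X) = κ_4(u⋅(AS)) = κ_4((Aᵀu)⋅S) = ∑_i (Aᵀu)_i^4 κ_4(S_i)$. -/
theorem kappa4_projection_noise_invariant
    {Ω : Type*} [MeasurableSpace Ω] (μ : Measure Ω) [IsProbabilityMeasure μ] {n : ℕ}
    (A : Matrix (Fin n) (Fin n) ℝ) (hA : IsUnit A)
    (S η X : Ω → Fin n → ℝ)
    (hSmeas : ∀ i, Measurable fun ω => S ω i)
    (hSmean : ∀ i, ∫ ω, S ω i ∂μ = 0)
    (hSvar : ∀ i, ∫ ω, (S ω i) ^ 2 ∂μ = 1)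
    (hSmom : ∀ i, MemLp (fun ω => S ω i) 4 μ)
    (hSind : iIndepFun (fun i ω => S ω i) μ)
    (hηmeas : ∀ i, Measurable fun ω => η ω i)
    (hηGauss : IsCenteredGaussianVector μ η)
    (hSη : IndepFun S η μ)
    (hX : ∀ ω, X ω = A.mulVec (S ω) + η ω)
    (u : Fin n → ℝ) (hu : ∑ i, (u i) ^ 2 = 1) :
    kappa4 μ (fun ω => ∑ i, u i * X ω i)
        = kappa4 μ (fun ω => ∑ i, u i * A.mulVec (S ω) i) ∧
    kappa4 μ (fun ω => ∑ i, u i * A.mulVec (S ω) i)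
        = kappa4 μ (fun ω => ∑ i, Aᵀ.mulVec u i * S ω i) ∧
    kappa4 μ (fun ω => ∑ i, Aᵀ.mulVec u i * S ω i)
        = ∑ i, (Aᵀ.mulVec u i) ^ 4 * kappa4 μ (fun ω => S ω i) :=
  kappa4_projection_noise_invariant_general μ A S η X hSmean hSmom hSind hηGauss hSη hX u
end

section
/- Let α_1, …, α_n be nonzero real numbers and define G : S^{n−1} → ℝ on the unit sphere by G(v) = Σ_{i=1}^n v_i^4 α_i. If some α_i > 0, then the set of local maxima of G restricted to the unit sphere is exactly { ±e_i : α_i > 0 }, where e_i denotes the i-th canonical basis vector; similarly, if some α_i < 0, then the set of local minima of G restricted to the unit sphere is exactly { ±e_i : α_i < 0 }. -/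
open MeasureTheory ProbabilityTheory Matrix

/-!
Squaring the coordinates maps the unit sphere onto the standard simplex, and choosing the signs
of a given point `v` gives a continuous section through `v`; hence `v` is a local maximum of
`G = ∑ v_k⁴ α_k` on the sphere iff `p = (v_k²)` is a local maximum of `F = ∑ p_k² α_k` on the
simplex. Moving mass `s` from a coordinate `i` with `p_i > 0` to a coordinate `j` changes `F` by
`s (2 (α_j p_j - α_i p_i) + s (α_i + α_j))`. At a local maximum this forces `α_j p_j ≤ α_i p_i`,
and `α_i + α_j ≤ 0` in case of equality; together with some `α_k > 0` this leaves only the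
vertices `e_i` with `α_i > 0`, which are indeed local maxima. Minima follow from `α ↦ -α`.
-/

open Filter Metric Topology

theorem nonpos_and_of_eventually_add_mul_nonpos {a b : ℝ}
    (h : ∀ᶠ s in 𝓝[>] (0 : ℝ), a + s * b ≤ 0) : a ≤ 0 ∧ (a = 0 → b ≤ 0) := by
  refine ⟨le_of_tendsto ?_ h, fun ha => ?_⟩
  · exact tendsto_nhdsWithin_of_tendsto_nhds (by simpa using
      ((by fun_prop : Continuous fun s : ℝ => a + s * b).tendsto 0))
  · obtain ⟨s, hs, hs₀⟩ := (h.and self_mem_nhdsWithin).exists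
    rw [ha, zero_add] at hs
    exact nonpos_of_mul_nonpos_right hs hs₀

section Simplex

variable {ι : Type*} [Fintype ι]

def weightedSumSq (α p : ι → ℝ) : ℝ := ∑ k, p k ^ 2 * α k

variable [DecidableEq ι]

theorem weightedSumSq_add_smul_single_sub_single (α p : ι → ℝ) {i j : ι} (hij : i ≠ j)
    (s : ℝ) :
    weightedSumSq α (p + s • (Pi.single j 1 - Pi.single i 1)) =
      weightedSumSq α p + s * (2 * (α j * p j - α i * p i) + s * (α i + α j)) := by
  rw [← sub_eq_iff_eq_add', weightedSumSq, weightedSumSq, ← Finset.sum_sub_distrib,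
    Fintype.sum_eq_add i j hij]
  · simp [hij, hij.symm]
    ring
  · rintro k ⟨hki, hkj⟩
    simp [hki, hkj]

theorem add_smul_single_sub_single_mem_stdSimplex {p : ι → ℝ} (hp : p ∈ stdSimplex ℝ ι)
    (i j : ι) {s : ℝ} (hs₀ : 0 ≤ s) (hs : s ≤ p i) :
    p + s • (Pi.single j 1 - Pi.single i 1) ∈ stdSimplex ℝ ι := by
  refine ⟨fun k => ?_, ?_⟩
  · have hj : 0 ≤ s * (Pi.single j 1 : ι → ℝ) k :=
      mul_nonneg hs₀ (by rw [Pi.single_apply]; split_ifs <;> norm_num)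
    have hi : s * (Pi.single i 1 : ι → ℝ) k ≤ p k := by
      rcases eq_or_ne k i with rfl | hki
      · simpa using hs
      · simpa [hki] using hp.1 k
    simp only [Pi.add_apply, Pi.smul_apply, Pi.sub_apply, smul_eq_mul]
    linarith
  · simp [Finset.sum_add_distrib, ← Finset.mul_sum, Finset.sum_sub_distrib, hp.2]

theorem weightedSumSq_single (α : ι → ℝ) (i : ι) : weightedSumSq α (Pi.single i 1) = α i := by
  rw [weightedSumSq, Finset.sum_eq_single i] <;> simp +contextual

theorem weightedSumSq_le_of_mem_stdSimplex {α p : ι → ℝ} (hp : p ∈ stdSimplex ℝ ι) {A : ℝ}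
    (hA : ∀ k, α k ≤ A) (hA₀ : 0 ≤ A) {i : ι} (hpi : A * (1 - p i) ≤ α i) :
    weightedSumSq α p ≤ α i := by
  have hrest : ∑ k ∈ Finset.univ.erase i, p k = 1 - p i := by
    rw [← hp.2, ← Finset.add_sum_erase _ _ (Finset.mem_univ i), add_sub_cancel_left]
  have hrest_sq : ∑ k ∈ Finset.univ.erase i, p k ^ 2 * α k ≤ A * (1 - p i) ^ 2 :=
    calc ∑ k ∈ Finset.univ.erase i, p k ^ 2 * α k
        ≤ ∑ k ∈ Finset.univ.erase i, p k ^ 2 * A :=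
          Finset.sum_le_sum fun k _ => mul_le_mul_of_nonneg_left (hA k) (sq_nonneg _)
      _ ≤ (∑ k ∈ Finset.univ.erase i, p k) ^ 2 * A := by
          rw [← Finset.sum_mul]
          exact mul_le_mul_of_nonneg_right
            (Finset.sum_sq_le_sq_sum_of_nonneg fun k _ => hp.1 k) hA₀
      _ = A * (1 - p i) ^ 2 := by rw [hrest, mul_comm]
  have hpi₁ : p i ≤ 1 := hp.2 ▸ Finset.single_le_sum (fun k _ => hp.1 k) (Finset.mem_univ i)
  rw [weightedSumSq, ← Finset.add_sum_erase _ _ (Finset.mem_univ i)]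
  have hαi : 0 ≤ α i := (mul_nonneg hA₀ (sub_nonneg.2 hpi₁)).trans hpi
  -- `A (1 - p_i)² ≤ α_i (1 - p_i) ≤ α_i (1 - p_i²)`
  nlinarith [mul_le_mul_of_nonneg_left hpi (sub_nonneg.2 hpi₁),
    mul_nonneg (mul_nonneg hαi (sub_nonneg.2 hpi₁)) (hp.1 i)]

theorem isLocalMaxOn_weightedSumSq_single {α : ι → ℝ} {i : ι} (hαi : 0 < α i) :
    IsLocalMaxOn (weightedSumSq α) (stdSimplex ℝ ι) (Pi.single i 1) := by
  set A := ∑ k, |α k|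
  have hA : ∀ k, α k ≤ A := fun k =>
    (le_abs_self _).trans (Finset.single_le_sum (fun k _ => abs_nonneg (α k)) (Finset.mem_univ k))
  have hnear : ∀ᶠ p in 𝓝 (Pi.single i 1 : ι → ℝ), A * (1 - p i) < α i :=
    (by fun_prop : Continuous fun p : ι → ℝ => A * (1 - p i)).continuousAt.eventually_lt
      continuousAt_const (by simpa)
  filter_upwards [nhdsWithin_le_nhds hnear, self_mem_nhdsWithin] with p hpA hp
  rw [weightedSumSq_single]
  exact weightedSumSq_le_of_mem_stdSimplex hp hA (Finset.sum_nonneg fun k _ => abs_nonneg _)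
    hpA.le

theorem IsLocalMaxOn.weightedSumSq_exchange {α p : ι → ℝ}
    (hmax : IsLocalMaxOn (weightedSumSq α) (stdSimplex ℝ ι) p) (hp : p ∈ stdSimplex ℝ ι)
    {i j : ι} (hij : i ≠ j) (hpi : 0 < p i) :
    α j * p j ≤ α i * p i ∧ (α j * p j = α i * p i → α i + α j ≤ 0) := by
  set γ : ℝ → ι → ℝ := fun s => p + s • (Pi.single j 1 - Pi.single i 1)
  have hγ : Tendsto γ (𝓝[>] 0) (𝓝[stdSimplex ℝ ι] p) := by
    refine tendsto_nhdsWithin_iff.2 ⟨?_, ?_⟩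
    · exact tendsto_nhdsWithin_of_tendsto_nhds (by simpa [γ] using
        ((by fun_prop : Continuous γ).tendsto 0))
    · filter_upwards [Ioo_mem_nhdsGT hpi] with s hs
      exact add_smul_single_sub_single_mem_stdSimplex hp i j hs.1.le hs.2.le
  have hslope : ∀ᶠ s in 𝓝[>] (0 : ℝ),
      2 * (α j * p j - α i * p i) + s * (α i + α j) ≤ 0 := by
    filter_upwards [hγ.eventually hmax, self_mem_nhdsWithin] with s hs hs₀
    rw [weightedSumSq_add_smul_single_sub_single α p hij] at hs
    exact nonpos_of_mul_nonpos_right (by linarith) hs₀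
  obtain ⟨hD, hE⟩ := nonpos_and_of_eventually_add_mul_nonpos hslope
  exact ⟨by linarith, fun h => hE (by rw [h, sub_self, mul_zero])⟩

theorem IsLocalMaxOn.weightedSumSq_pos {α p : ι → ℝ}
    (hmax : IsLocalMaxOn (weightedSumSq α) (stdSimplex ℝ ι) p) (hp : p ∈ stdSimplex ℝ ι)
    (hα : ∃ k, 0 < α k) {i : ι} (hpi : 0 < p i) : 0 < α i := by
  obtain ⟨k, hk⟩ := hα
  rcases eq_or_ne k i with rfl | hki
  · exact hk
  obtain ⟨hle, heq⟩ := hmax.weightedSumSq_exchange hp hki.symm hpi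
  have hk₀ : 0 ≤ α k * p k := mul_nonneg hk.le (hp.1 k)
  by_contra! hαi
  have hi₀ : α i * p i ≤ 0 := mul_nonpos_of_nonpos_of_nonneg hαi hpi.le
  have hαi₀ : α i = 0 := by nlinarith
  linarith [heq (by linarith)]

theorem IsLocalMaxOn.weightedSumSq_eq_single {α p : ι → ℝ}
    (hmax : IsLocalMaxOn (weightedSumSq α) (stdSimplex ℝ ι) p) (hp : p ∈ stdSimplex ℝ ι)
    (hα : ∃ k, 0 < α k) : ∃ i, 0 < α i ∧ p = Pi.single i 1 := by
  obtain ⟨i, -, hpi⟩ := Finset.exists_lt_of_sum_lt (s := Finset.univ) (f := 0) (g := p)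
    (by simp only [Pi.zero_apply, Finset.sum_const_zero, hp.2, zero_lt_one])
  have hsupp : ∀ j, j ≠ i → p j = 0 := by
    intro j hji
    by_contra hpj
    have hpj' : 0 < p j := (hp.1 j).lt_of_ne' hpj
    obtain ⟨hji_le, hji_eq⟩ := hmax.weightedSumSq_exchange hp hji.symm hpi
    obtain ⟨hij_le, -⟩ := hmax.weightedSumSq_exchange hp hji hpj'
    linarith [hji_eq (le_antisymm hji_le hij_le), hmax.weightedSumSq_pos hp hα hpi,
      hmax.weightedSumSq_pos hp hα hpj']
  have hpi₁ : p i = 1 := by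
    rw [← hp.2, Finset.sum_eq_single i (fun j _ => hsupp j) (absurd (Finset.mem_univ i))]
  refine ⟨i, hmax.weightedSumSq_pos hp hα hpi, funext fun k => ?_⟩
  rcases eq_or_ne k i with rfl | hki
  · simpa using hpi₁
  · simp [hki, hsupp k hki]

theorem mem_stdSimplex_and_isLocalMaxOn_weightedSumSq_iff {α : ι → ℝ} (hα : ∃ k, 0 < α k)
    {p : ι → ℝ} :
    (p ∈ stdSimplex ℝ ι ∧ IsLocalMaxOn (weightedSumSq α) (stdSimplex ℝ ι) p) ↔
      ∃ i, 0 < α i ∧ p = Pi.single i 1 := by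
  refine ⟨fun ⟨hp, hmax⟩ => hmax.weightedSumSq_eq_single hp hα, ?_⟩
  rintro ⟨i, hαi, rfl⟩
  exact ⟨single_mem_stdSimplex ℝ i, isLocalMaxOn_weightedSumSq_single hαi⟩

end Simplex

section Sphere

variable {ι : Type*}

def sqCoords (v : EuclideanSpace ℝ ι) : ι → ℝ := fun k => v k ^ 2

noncomputable def signedSqrt (v : EuclideanSpace ℝ ι) (p : ι → ℝ) : EuclideanSpace ℝ ι :=
  WithLp.toLp 2 fun k => if v k < 0 then -√(p k) else √(p k)

theorem continuous_sqCoords : Continuous (sqCoords : EuclideanSpace ℝ ι → ι → ℝ) := by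
  unfold sqCoords; fun_prop

theorem continuous_signedSqrt (v : EuclideanSpace ℝ ι) : Continuous (signedSqrt v) := by
  refine (PiLp.continuous_toLp 2 _).comp (continuous_pi fun k => ?_)
  split_ifs <;> fun_prop

theorem sqCoords_mem_stdSimplex_iff [Fintype ι] {v : EuclideanSpace ℝ ι} :
    sqCoords v ∈ stdSimplex ℝ ι ↔ v ∈ sphere 0 1 := by
  rw [mem_sphere_zero_iff_norm, ← pow_eq_one_iff_of_nonneg (norm_nonneg v) two_ne_zero,
    EuclideanSpace.real_norm_sq_eq]
  exact and_iff_right fun k => sq_nonneg (v k)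

theorem sqCoords_signedSqrt (v : EuclideanSpace ℝ ι) {p : ι → ℝ} (hp : ∀ k, 0 ≤ p k) :
    sqCoords (signedSqrt v p) = p := by
  funext k
  simp only [sqCoords, signedSqrt]
  split_ifs <;> simp [Real.sq_sqrt (hp k)]

theorem signedSqrt_sqCoords (v : EuclideanSpace ℝ ι) : signedSqrt v (sqCoords v) = v := by
  ext k
  simp only [signedSqrt, sqCoords, Real.sqrt_sq_eq_abs]
  split_ifs with h
  · simp [abs_of_neg h]
  · simp [abs_of_nonneg (not_lt.1 h)]

theorem mapsTo_signedSqrt_stdSimplex [Fintype ι] (v : EuclideanSpace ℝ ι) :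
    Set.MapsTo (signedSqrt v) (stdSimplex ℝ ι) (sphere 0 1) := fun p hp => by
  rw [← sqCoords_mem_stdSimplex_iff, sqCoords_signedSqrt v hp.1]
  exact hp

theorem isLocalMaxOn_comp_sqCoords_iff [Fintype ι] {f : (ι → ℝ) → ℝ} {v : EuclideanSpace ℝ ι} :
    (v ∈ sphere 0 1 ∧ IsLocalMaxOn (f ∘ sqCoords) (sphere 0 1) v) ↔
      (sqCoords v ∈ stdSimplex ℝ ι ∧ IsLocalMaxOn f (stdSimplex ℝ ι) (sqCoords v)) := by
  rw [sqCoords_mem_stdSimplex_iff]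
  refine and_congr_right fun hv => ⟨fun h => ?_, fun h => ?_⟩
  · rw [← signedSqrt_sqCoords v] at h
    refine (h.comp_continuousOn (mapsTo_signedSqrt_stdSimplex v)
      (continuous_signedSqrt v).continuousOn (sqCoords_mem_stdSimplex_iff.2 hv)).congr
      (Set.EqOn.eventuallyEq_nhdsWithin fun p hp => congrArg f (sqCoords_signedSqrt v hp.1))
      (sqCoords_mem_stdSimplex_iff.2 hv)
  · exact h.comp_continuousOn (fun w hw => sqCoords_mem_stdSimplex_iff.2 hw)
      continuous_sqCoords.continuousOn hv

theorem sqCoords_eq_single_iff [DecidableEq ι] {v : EuclideanSpace ℝ ι} {i : ι} :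
    sqCoords v = Pi.single i 1 ↔
      v = EuclideanSpace.single i 1 ∨ v = -EuclideanSpace.single i 1 := by
  constructor
  · intro h
    have hk : ∀ k, k ≠ i → v k = 0 := fun k hk => by simpa [sqCoords, hk] using congrFun h k
    have hi : v i = 1 ∨ v i = -1 := by simpa [sqCoords] using congrFun h i
    rcases hi with hi | hi <;> [left; right] <;> ext k <;> rcases eq_or_ne k i with rfl | hki <;>
      simp [*]
  · rintro (rfl | rfl) <;> funext k <;> rcases eq_or_ne k i with rfl | hki <;> simp [sqCoords, *]

theorem mem_sphere_and_isLocalMaxOn_quartic_iff [Fintype ι] [DecidableEq ι] {α : ι → ℝ}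
    (hα : ∃ k, 0 < α k) {v : EuclideanSpace ℝ ι} :
    (v ∈ sphere 0 1 ∧ IsLocalMaxOn (fun w : EuclideanSpace ℝ ι => ∑ k, w k ^ 4 * α k)
      (sphere 0 1) v) ↔
      ∃ i, 0 < α i ∧ (v = EuclideanSpace.single i 1 ∨ v = -EuclideanSpace.single i 1) := by
  have hG : (fun w : EuclideanSpace ℝ ι => ∑ k, w k ^ 4 * α k) = weightedSumSq α ∘ sqCoords := by
    funext w
    simp [weightedSumSq, sqCoords, ← pow_mul]
  rw [hG, isLocalMaxOn_comp_sqCoords_iff, mem_stdSimplex_and_isLocalMaxOn_weightedSumSq_iff hα]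
  simp_rw [sqCoords_eq_single_iff]

end Sphere

theorem localExtrema_of_quartic_on_sphere_general
    {n : ℕ} (α : Fin n → ℝ)
    (G : EuclideanSpace ℝ (Fin n) → ℝ)
    (hG : ∀ v, G v = ∑ i, (v i) ^ 4 * α i) :
    ((∃ i, 0 < α i) →
      {v | v ∈ Metric.sphere (0 : EuclideanSpace ℝ (Fin n)) 1 ∧
            IsLocalMaxOn G (Metric.sphere (0 : EuclideanSpace ℝ (Fin n)) 1) v}
        = {v | ∃ i, 0 < α i ∧
            (v = EuclideanSpace.single i (1 : ℝ) ∨ v = -EuclideanSpace.single i (1 : ℝ))}) ∧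
    ((∃ i, α i < 0) →
      {v | v ∈ Metric.sphere (0 : EuclideanSpace ℝ (Fin n)) 1 ∧
            IsLocalMinOn G (Metric.sphere (0 : EuclideanSpace ℝ (Fin n)) 1) v}
        = {v | ∃ i, α i < 0 ∧
            (v = EuclideanSpace.single i (1 : ℝ) ∨ v = -EuclideanSpace.single i (1 : ℝ))}) := by
  obtain rfl : G = fun v => ∑ i, v i ^ 4 * α i := funext hG
  refine ⟨fun hpos => Set.ext fun v => mem_sphere_and_isLocalMaxOn_quartic_iff hpos,
    fun ⟨k, hk⟩ => Set.ext fun v => ?_⟩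
  have hmax := mem_sphere_and_isLocalMaxOn_quartic_iff (α := -α) ⟨k, neg_pos.2 hk⟩ (v := v)
  simp only [Pi.neg_apply, mul_neg, Finset.sum_neg_distrib, neg_pos] at hmax
  rw [Set.mem_ofPred_eq, Set.mem_ofPred_eq, ← hmax]
  exact and_congr_right fun _ => ⟨IsLocalMinOn.neg, fun h => by simpa using h.neg⟩

/-- for nonzero reals $α_i$ and $G(v) = ∑_i v_i^4 α_i$ on the unit
sphere, if some $α_i > 0$ then the local maxima of $G$ on the sphere are exactly
$\{±e_i : α_i > 0\}$, and if some $α_i < 0$ then the local minima are exactly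
$\{±e_i : α_i < 0\}$. -/
theorem localExtrema_of_quartic_on_sphere
    {n : ℕ} (α : Fin n → ℝ) (hα : ∀ i, α i ≠ 0)
    (G : EuclideanSpace ℝ (Fin n) → ℝ)
    (hG : ∀ v, G v = ∑ i, (v i) ^ 4 * α i) :
    ((∃ i, 0 < α i) →
      {v | v ∈ Metric.sphere (0 : EuclideanSpace ℝ (Fin n)) 1 ∧
            IsLocalMaxOn G (Metric.sphere (0 : EuclideanSpace ℝ (Fin n)) 1) v}
        = {v | ∃ i, 0 < α i ∧
            (v = EuclideanSpace.single i (1 : ℝ) ∨ v = -EuclideanSpace.single i (1 : ℝ))}) ∧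
    ((∃ i, α i < 0) →
      {v | v ∈ Metric.sphere (0 : EuclideanSpace ℝ (Fin n)) 1 ∧
            IsLocalMinOn G (Metric.sphere (0 : EuclideanSpace ℝ (Fin n)) 1) v}
        = {v | ∃ i, α i < 0 ∧
            (v = EuclideanSpace.single i (1 : ℝ) ∨ v = -EuclideanSpace.single i (1 : ℝ))}) :=
  localExtrema_of_quartic_on_sphere_general α G hG
end

section
/- The fourth k-statistic is an unbiased estimator of the fourth cumulant: if y^{(1)}, …, y^{(N)} (with N ≥ 4) are i.i.d. copies of a zero-mean random vector Y in ℝ^n with finite fourth moments, then for all indices i, j, k, l, E[k(y_i, y_j, y_k, y_l)] = Cum(Y_i, Y_j, Y_k, Y_l). -/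
open MeasureTheory ProbabilityTheory Matrix

/-
A sample moment `E[y_r^i y_s^j y_t^k y_u^l]` vanishes as soon as one sample index among
`r, s, t, u` differs from the other three (independence and zero mean). What survives is the
diagonal `r = s = t = u`, contributing the fourth moment of `Y`, and the three ways of splitting
the indices into two distinct pairs, contributing products of second moments. The weight `φ`
is `1` on the diagonal and `-1/(N-1)` on pairings; since there are `N` diagonal and
`N(N-1)` pairing index tuples of each kind, averaging gives exactly the fourth cumulant.
-/

open Finset

instance ENNReal.HolderTriple.instFourFourTwo : ENNReal.HolderTriple 4 4 2 := ⟨by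
  rw [show (4 : ENNReal) = 2 * 2 by norm_num, ENNReal.mul_inv (by simp) (by simp), ← mul_add,
    ENNReal.inv_two_add_inv_two, mul_one]⟩

lemma MeasureTheory.MemLp.integrable_mul_mul_mul {Ω : Type*} [MeasurableSpace Ω]
    {μ : Measure Ω} {f g h k : Ω → ℝ} (hf : MemLp f 4 μ) (hg : MemLp g 4 μ)
    (hh : MemLp h 4 μ) (hk : MemLp k 4 μ) :
    Integrable (fun ω => f ω * g ω * h ω * k ω) μ := by
  simpa only [Pi.mul_def, mul_assoc] using
    (hg.mul' hf (r := 2)).integrable_mul (hk.mul' hh (r := 2))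

lemma eq_all_or_two_pairs_or_one_apart {ι : Type*} (r s t u : ι) :
    (r = s ∧ s = t ∧ t = u) ∨ (r = s ∧ t = u ∧ r ≠ t) ∨ (r = t ∧ s = u ∧ r ≠ s) ∨
      (r = u ∧ s = t ∧ r ≠ s) ∨ (s ≠ r ∧ t ≠ r ∧ u ≠ r) ∨ (r ≠ s ∧ t ≠ s ∧ u ≠ s) ∨
      (r ≠ t ∧ s ≠ t ∧ u ≠ t) ∨ (r ≠ u ∧ s ≠ u ∧ t ≠ u) := by
  grind

/-- The value of `E[y_r^i y_s^j y_t^k y_u^l]` for an i.i.d. centered sample, with `a` the fourth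
moment and `b`, `c`, `d` the products of second moments for the pairings `rs|tu`, `rt|su`,
`ru|st`. -/
def momentPattern {ι : Type*} [DecidableEq ι] (a b c d : ℝ) (r s t u : ι) : ℝ :=
  (if r = s ∧ s = t ∧ t = u then a else 0) + (if r = s ∧ t = u ∧ r ≠ t then b else 0)
    + (if r = t ∧ s = u ∧ r ≠ s then c else 0) + (if r = u ∧ s = t ∧ r ≠ s then d else 0)

lemma sum_momentPattern {ι : Type*} [Fintype ι] [DecidableEq ι] (a b c d : ℝ) :
    ∑ r : ι, ∑ s : ι, ∑ t : ι, ∑ u : ι, momentPattern a b c d r s t u =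
      Fintype.card ι * a + Fintype.card ι * (Fintype.card ι - 1) * (b + c + d) := by
  rcases isEmpty_or_nonempty ι with hι | hι
  · simp
  · simp only [momentPattern, ite_and, ne_eq, ite_not, sum_add_distrib, sum_ite_irrel,
      sum_ite_eq, mem_univ, ↓reduceIte, sum_const_zero, sum_ite, filter_ne, sum_const,
      card_erase_of_mem, card_univ, nsmul_eq_mul, Nat.cast_sub Fintype.card_pos,
      Nat.cast_one, zero_add]
    ring

lemma kphi_mul_momentPattern {N : ℕ} (r s t u : Fin N) (a b c d : ℝ) :
    kphi N r s t u * momentPattern a b c d r s t u =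
      momentPattern a (-b / (N - 1)) (-c / (N - 1)) (-d / (N - 1)) r s t u := by
  rcases eq_all_or_two_pairs_or_one_apart r s t u with
    ⟨rfl, rfl, rfl⟩ | ⟨rfl, rfl, h⟩ | ⟨rfl, rfl, h⟩ | ⟨rfl, rfl, h⟩ |
    ⟨hs, ht, hu⟩ | ⟨hr, ht, hu⟩ | ⟨hr, hs, hu⟩ | ⟨hr, hs, ht⟩
  · simp [momentPattern, kphi]
  · simp [momentPattern, kphi, h, div_mul_eq_mul_div]
  · simp [momentPattern, kphi, h, div_mul_eq_mul_div]
  · simp [momentPattern, kphi, h, h.symm, div_mul_eq_mul_div]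
  · simp [momentPattern, hs.symm, ht.symm, hu.symm]
  · simp [momentPattern, hr, ht.symm, hu.symm]
  · simp [momentPattern, hr, hs, hu.symm]
  · simp [momentPattern, hr, hs, ht]

lemma integral_kstat {Ω : Type*} [MeasurableSpace Ω] {μ : Measure Ω} {N : ℕ}
    {x₁ x₂ x₃ x₄ : Fin N → Ω → ℝ}
    (hint : ∀ r s t u, Integrable (fun ω => x₁ r ω * x₂ s ω * x₃ t ω * x₄ u ω) μ) :
    ∫ ω, kstat (fun r => x₁ r ω) (fun r => x₂ r ω) (fun r => x₃ r ω) (fun r => x₄ r ω) ∂μ =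
      1 / N * ∑ r, ∑ s, ∑ t, ∑ u,
        kphi N r s t u * ∫ ω, x₁ r ω * x₂ s ω * x₃ t ω * x₄ u ω ∂μ := by
  simp only [kstat, mul_assoc (kphi _ _ _ _ _)]
  have hterm (r s t u : Fin N) :
      Integrable (fun ω => kphi N r s t u * (x₁ r ω * x₂ s ω * x₃ t ω * x₄ u ω)) μ :=
    (hint r s t u).const_mul _
  rw [integral_const_mul, integral_finsetSum _ fun r _ => integrable_finsetSum _ fun s _ =>
    integrable_finsetSum _ fun t _ => integrable_finsetSum _ fun u _ => hterm r s t u]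
  congr 1
  refine sum_congr rfl fun r _ => ?_
  rw [integral_finsetSum _ fun s _ => integrable_finsetSum _ fun t _ =>
    integrable_finsetSum _ fun u _ => hterm r s t u]
  refine sum_congr rfl fun s _ => ?_
  rw [integral_finsetSum _ fun t _ => integrable_finsetSum _ fun u _ => hterm r s t u]
  refine sum_congr rfl fun t _ => ?_
  rw [integral_finsetSum _ fun u _ => hterm r s t u]
  exact sum_congr rfl fun u _ => integral_const_mul _ _

section IID

variable {Ω ι κ : Type*} [MeasurableSpace Ω] {μ : Measure Ω} {y : ι → Ω → κ → ℝ}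

lemma integral_mul_mul_mul_eq_zero_of_iIndepFun (hy : ∀ r, Measurable (y r))
    (hind : iIndepFun y μ) {r s t a : ι} (hr : r ≠ a) (hs : s ≠ a) (ht : t ≠ a)
    (c₁ c₂ c₃ c : κ) (h0 : ∫ ω, y a ω c ∂μ = 0) :
    ∫ ω, y r ω c₁ * y s ω c₂ * y t ω c₃ * y a ω c ∂μ = 0 := by
  classical
  have hdisj : Disjoint ({r, s, t} : Finset ι) {a} := by
    simp [hr.symm, hs.symm, ht.symm]
  have hindep := (hind.indepFun_finset _ _ hdisj hy).comp
    (φ := fun v : ({r, s, t} : Finset ι) → κ → ℝ =>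
      v ⟨r, by simp⟩ c₁ * v ⟨s, by simp⟩ c₂ * v ⟨t, by simp⟩ c₃)
    (ψ := fun v : ({a} : Finset ι) → κ → ℝ => v ⟨a, by simp⟩ c) (by fun_prop) (by fun_prop)
  have := hindep.integral_fun_mul_eq_mul_integral (by fun_prop) (by fun_prop)
  simp only [Function.comp_def] at this
  rw [this, h0, mul_zero]

lemma integral_mul_mul_mul_eq_mul_of_iIndepFun (hy : ∀ r, Measurable (y r))
    (hind : iIndepFun y μ) {r t : ι} (hrt : r ≠ t) (a b c d : κ) :
    ∫ ω, y r ω a * y r ω b * y t ω c * y t ω d ∂μ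
      = (∫ ω, y r ω a * y r ω b ∂μ) * ∫ ω, y t ω c * y t ω d ∂μ := by
  have hindep := (hind.indepFun hrt).comp
    (φ := fun v => v a * v b) (ψ := fun v => v c * v d) (by fun_prop) (by fun_prop)
  have := hindep.integral_fun_mul_eq_mul_integral (by fun_prop) (by fun_prop)
  simp only [Function.comp_def] at this
  simpa only [mul_assoc] using this

lemma integral_mul_mul_mul_eq_momentPattern [DecidableEq ι] (hy : ∀ r, Measurable (y r))
    (hind : iIndepFun y μ) {Y : Ω → κ → ℝ} (hY : ∀ r, IdentDistrib (y r) Y μ μ)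
    (hmean : ∀ c, ∫ ω, Y ω c ∂μ = 0) (r s t u : ι) (i j k l : κ) :
    ∫ ω, y r ω i * y s ω j * y t ω k * y u ω l ∂μ =
      momentPattern (∫ ω, Y ω i * Y ω j * Y ω k * Y ω l ∂μ)
        ((∫ ω, Y ω i * Y ω j ∂μ) * ∫ ω, Y ω k * Y ω l ∂μ)
        ((∫ ω, Y ω i * Y ω k ∂μ) * ∫ ω, Y ω j * Y ω l ∂μ)
        ((∫ ω, Y ω i * Y ω l ∂μ) * ∫ ω, Y ω j * Y ω k ∂μ) r s t u := by
  have hcentered (a : ι) (c : κ) : ∫ ω, y a ω c ∂μ = 0 :=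
    ((hY a).comp (measurable_pi_apply c)).integral_eq.trans (hmean c)
  have hsecond (a : ι) (b c : κ) : ∫ ω, y a ω b * y a ω c ∂μ = ∫ ω, Y ω b * Y ω c ∂μ :=
    ((hY a).comp (u := fun v : κ → ℝ => v b * v c) (by fun_prop)).integral_eq
  rcases eq_all_or_two_pairs_or_one_apart r s t u with
    ⟨rfl, rfl, rfl⟩ | ⟨rfl, rfl, h⟩ | ⟨rfl, rfl, h⟩ | ⟨rfl, rfl, h⟩ |
    ⟨hs, ht, hu⟩ | ⟨hr, ht, hu⟩ | ⟨hr, hs, hu⟩ | ⟨hr, hs, ht⟩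
  · simpa [momentPattern] using
      ((hY r).comp (u := fun v : κ → ℝ => v i * v j * v k * v l) (by fun_prop)).integral_eq
  · simp [momentPattern, h, integral_mul_mul_mul_eq_mul_of_iIndepFun hy hind h, hsecond]
  · simpa [momentPattern, h, hsecond, mul_comm, mul_left_comm] using
      integral_mul_mul_mul_eq_mul_of_iIndepFun hy hind h i k j l
  · simpa [momentPattern, h, hsecond, mul_comm, mul_left_comm] using
      integral_mul_mul_mul_eq_mul_of_iIndepFun hy hind h i l j k
  · simpa [momentPattern, hs.symm, ht.symm, hu.symm, mul_comm, mul_left_comm] using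
      integral_mul_mul_mul_eq_zero_of_iIndepFun hy hind hs ht hu j k l i (hcentered r i)
  · simpa [momentPattern, hr, ht.symm, hu.symm, mul_comm, mul_left_comm] using
      integral_mul_mul_mul_eq_zero_of_iIndepFun hy hind hr ht hu i k l j (hcentered s j)
  · simpa [momentPattern, hr, hs, hu.symm, mul_comm, mul_left_comm] using
      integral_mul_mul_mul_eq_zero_of_iIndepFun hy hind hr hs hu i j l k (hcentered t k)
  · simpa [momentPattern, hr, hs, ht] using
      integral_mul_mul_mul_eq_zero_of_iIndepFun hy hind hr hs ht i j k l (hcentered u l)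

end IID

theorem kstat_unbiased_general
    {Ω : Type*} [MeasurableSpace Ω] (μ : Measure Ω) {n N : ℕ}
    (hN : 4 ≤ N)
    (Y : Ω → Fin n → ℝ) (hYmeas : Measurable Y)
    (hYmom : ∀ i, MemLp (fun ω => Y ω i) 4 μ)
    (hYmean : ∀ i, ∫ ω, Y ω i ∂μ = 0)
    (y : Fin N → Ω → Fin n → ℝ)
    (hymeas : ∀ r, Measurable (y r))
    (hident : ∀ r, Measure.map (y r) μ = Measure.map Y μ)
    (hindep : iIndepFun y μ) :
    ∀ i j k l : Fin n,
      (∫ ω, kstat (fun r => y r ω i) (fun r => y r ω j)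
          (fun r => y r ω k) (fun r => y r ω l) ∂μ)
        = cum4 μ Y i j k l := by
  intro i j k l
  have hY (r : Fin N) : IdentDistrib (y r) Y μ μ :=
    ⟨(hymeas r).aemeasurable, hYmeas.aemeasurable, hident r⟩
  have hmem (r : Fin N) (c : Fin n) : MemLp (fun ω => y r ω c) 4 μ :=
    ((hY r).comp (measurable_pi_apply c)).memLp_iff.2 (hYmom c)
  have hN1 : (N : ℝ) - 1 ≠ 0 := sub_ne_zero.2 (by exact_mod_cast (by omega : N ≠ 1))
  rw [integral_kstat fun r s t u =>
    (hmem r i).integrable_mul_mul_mul (hmem s j) (hmem t k) (hmem u l)]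
  simp_rw [integral_mul_mul_mul_eq_momentPattern hymeas hindep hY hYmean,
    kphi_mul_momentPattern]
  rw [sum_momentPattern, Fintype.card_fin, cum4]
  field_simp
  ring

/-- the fourth k-statistic is an unbiased estimator of the fourth
cumulant: for an i.i.d. sample $y^{(1)},…,y^{(N)}$ ($N ≥ 4$) of a zero-mean
random vector $Y$ with finite fourth moments,
$E[k(y_i,y_j,y_k,y_l)] = \mathrm{Cum}(Y_i,Y_j,Y_k,Y_l)$. -/
theorem kstat_unbiased
    {Ω : Type*} [MeasurableSpace Ω] (μ : Measure Ω) [IsProbabilityMeasure μ] {n N : ℕ}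
    (hN : 4 ≤ N)
    (Y : Ω → Fin n → ℝ) (hYmeas : Measurable Y)
    (hYmom : ∀ i, MemLp (fun ω => Y ω i) 4 μ)
    (hYmean : ∀ i, ∫ ω, Y ω i ∂μ = 0)
    (y : Fin N → Ω → Fin n → ℝ)
    (hymeas : ∀ r, Measurable (y r))
    (hident : ∀ r, Measure.map (y r) μ = Measure.map Y μ)
    (hindep : iIndepFun y μ) :
    ∀ i j k l : Fin n,
      (∫ ω, kstat (fun r => y r ω i) (fun r => y r ω j)
          (fun r => y r ω k) (fun r => y r ω l) ∂μ)
        = cum4 μ Y i j k l :=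
  kstat_unbiased_general μ hN Y hYmeas hYmom hYmean y hymeas hident hindep
end

section
/- There exists a universal constant C > 0 such that for every N ≥ 8 and every zero-mean random vector Z in ℝ^n with finite eighth moments, if z^{(1)}, …, z^{(N)} are i.i.d. copies of Z, then for all indices i, j, k, l, Var(k(z_i, z_j, z_k, z_l)) ≤ C · (max_{q ∈ [n]} E[Z_q^8]) / N. -/
open MeasureTheory ProbabilityTheory Matrix

open Finset

/-!
Write the k-statistic as `N⁻¹ ∑ₚ φ(p) Yₚ` over index maps `p : Fin 4 → Fin N`, where
`Yₚ` (`sampleProd`) is a product of four sample coordinates. If `p` and `q` use disjoint sets of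
samples then `Yₚ` and `Y_q` are independent, so only overlapping pairs contribute covariance, and by AM-GM each such
covariance is at most `M = max_q E[Z_q⁸]`. The weights satisfy `|φ(p)| ≤ 16 N · N^{-#range p}`
for `N ≥ 8`, so an overlapping pair carries weight at most `256 N · N^{-#(range p ∪ range q)}`.
Summing `N^{-#(S ∪ range x)}` over all `x : Fin k → Fin N` costs only a factor `(#S + k)^k`
(each value outside `S` is paid for by a factor `N⁻¹`), so the total weight of overlapping pairs
is `O(N)` and the variance is `O(M / N)`.
-/

section Counting

lemma sum_fin_succ_pi {α M : Type*} [Fintype α] [AddCommMonoid M] {k : ℕ}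
    (f : (Fin (k + 1) → α) → M) : ∑ x, f x = ∑ a, ∑ x : Fin k → α, f (Fin.cons a x) := by
  rw [← (Fin.consEquiv fun _ => α).sum_comp, Fintype.sum_prod_type]
  rfl

variable {α : Type*} [DecidableEq α]

lemma image_univ_fin_cons {k : ℕ} (a : α) (x : Fin k → α) :
    univ.image (Fin.cons a x : Fin (k + 1) → α) = insert a (univ.image x) := by
  ext b
  simp [Fin.exists_fin_succ, eq_comm]

lemma image_univ_fin_four (p : Fin 4 → α) :
    univ.image p = {p 0, p 1, p 2, p 3} := by
  ext b
  simp [Fin.exists_fin_succ, eq_comm]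

lemma pow_card_add_card_le_of_not_disjoint {ρ : ℝ} (h0 : 0 ≤ ρ) (h1 : ρ ≤ 1) {S T : Finset α}
    (h : ¬Disjoint S T) : ρ ^ (#S + #T) ≤ ρ * ρ ^ #(S ∪ T) := by
  have hinter : 0 < #(S ∩ T) := card_pos.mpr (not_disjoint_iff_nonempty_inter.mp h)
  rw [← pow_succ', ← card_union_add_card_inter]
  exact pow_le_pow_of_le_one h0 h1 (by omega)

variable [Fintype α]

lemma sum_inv_card_pow_card_insert_le (S : Finset α) :
    ∑ a, (Fintype.card α : ℝ)⁻¹ ^ #(insert a S) ≤ (#S + 1) * (Fintype.card α : ℝ)⁻¹ ^ #S := by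
  set ρ := (Fintype.card α : ℝ)⁻¹
  have hρ : 0 ≤ ρ := by positivity
  have hterm (a : α) : ρ ^ #(insert a S) ≤ ρ ^ #S * ((if a ∈ S then 1 else 0) + ρ) := by
    by_cases ha : a ∈ S
    · simp only [ha, insert_eq_of_mem, if_true]
      exact le_mul_of_one_le_right (by positivity) (by linarith)
    · simp [ha, pow_succ]
  calc ∑ a, ρ ^ #(insert a S) ≤ ∑ a, ρ ^ #S * ((if a ∈ S then 1 else 0) + ρ) :=
        sum_le_sum fun a _ => hterm a
    _ = ρ ^ #S * (#S + Fintype.card α * ρ) := by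
        simp [← mul_sum, sum_add_distrib]
    _ ≤ (#S + 1) * ρ ^ #S := by
        have : (Fintype.card α : ℝ) * ρ ≤ 1 := mul_inv_le_one
        nlinarith [pow_nonneg hρ #S]

theorem sum_inv_card_pow_card_union_image_le (S : Finset α) (k : ℕ) :
    ∑ x : Fin k → α, (Fintype.card α : ℝ)⁻¹ ^ #(S ∪ univ.image x)
      ≤ (Fintype.card α : ℝ)⁻¹ ^ #S * (#S + k) ^ k := by
  set ρ := (Fintype.card α : ℝ)⁻¹
  induction k generalizing S with
  | zero => simp
  | succ k ih =>
    have hcard (a : α) : (#(insert a S) : ℝ) + k ≤ #S + (k + 1 : ℕ) := by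
      have := (Nat.cast_le (α := ℝ)).mpr (card_insert_le a S)
      push_cast at this ⊢
      linarith
    calc ∑ x : Fin (k + 1) → α, ρ ^ #(S ∪ univ.image x)
        = ∑ a, ∑ x : Fin k → α, ρ ^ #(insert a S ∪ univ.image x) := by
          simp only [sum_fin_succ_pi, image_univ_fin_cons, union_insert, insert_union]
      _ ≤ ∑ a, ρ ^ #(insert a S) * (#S + (k + 1 : ℕ)) ^ k := by
          gcongr with a
          exact (ih _).trans <| mul_le_mul_of_nonneg_left
            (pow_le_pow_left₀ (by positivity) (hcard a) k) (by positivity)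
      _ = (∑ a, ρ ^ #(insert a S)) * (#S + (k + 1 : ℕ)) ^ k := by rw [sum_mul]
      _ ≤ (#S + 1) * ρ ^ #S * (#S + (k + 1 : ℕ)) ^ k := by
          gcongr
          exact sum_inv_card_pow_card_insert_le S
      _ ≤ ρ ^ #S * (#S + (k + 1 : ℕ)) ^ (k + 1) := by
          have hS : (#S : ℝ) + 1 ≤ #S + (k + 1 : ℕ) := by push_cast; linarith
          have := mul_le_mul_of_nonneg_left hS
            (by positivity : (0 : ℝ) ≤ ρ ^ #S * (#S + (k + 1 : ℕ)) ^ k)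
          linear_combination this

end Counting

section KStatWeights

variable {N : ℕ}

lemma abs_kphi_le (hN : 8 ≤ N) (r s t u : Fin N) :
    |kphi N r s t u| ≤ 16 * N * (N : ℝ)⁻¹ ^ #{r, s, t, u} := by
  have hpos : 1 ≤ #{r, s, t, u} := card_pos.mpr ⟨r, by simp⟩
  have hle : #{r, s, t, u} ≤ 4 := card_le_four
  have hN' : (8 : ℝ) ≤ N := by exact_mod_cast hN
  have h1 : (0 : ℝ) < N - 1 := by linarith
  have h12 : (0 : ℝ) < (N - 1) * (N - 2) := mul_pos h1 (by linarith)
  have h123 : (0 : ℝ) < (N - 1) * (N - 2) * (N - 3) := mul_pos h12 (by linarith)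
  unfold kphi
  generalize #{r, s, t, u} = c at hpos hle ⊢
  interval_cases c
  · show |(1 : ℝ)| ≤ _
    field_simp
    norm_num
  · show |-1 / ((N : ℝ) - 1)| ≤ _
    rw [abs_div, abs_of_pos h1, div_le_iff₀ h1]
    field_simp
    norm_num
    nlinarith
  · show |2 / (((N : ℝ) - 1) * ((N : ℝ) - 2))| ≤ _
    rw [abs_div, abs_of_pos h12, div_le_iff₀ h12]
    field_simp
    norm_num
    nlinarith
  · show |-6 / (((N : ℝ) - 1) * ((N : ℝ) - 2) * ((N : ℝ) - 3))| ≤ _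
    rw [abs_div, abs_of_pos h123, div_le_iff₀ h123]
    field_simp
    norm_num
    nlinarith

lemma abs_kphi_fin_four_le (hN : 8 ≤ N) (p : Fin 4 → Fin N) :
    |kphi N (p 0) (p 1) (p 2) (p 3)| ≤ 16 * N * (N : ℝ)⁻¹ ^ #(univ.image p) := by
  rw [image_univ_fin_four]
  exact abs_kphi_le hN _ _ _ _

theorem sum_abs_kphi_mul_abs_kphi_of_not_disjoint_le (hN : 8 ≤ N) :
    ∑ p : Fin 4 → Fin N, ∑ q : Fin 4 → Fin N with ¬Disjoint (univ.image p) (univ.image q),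
      |kphi N (p 0) (p 1) (p 2) (p 3)| * |kphi N (q 0) (q 1) (q 2) (q 3)| ≤ 2 ^ 28 * N := by
  set ρ := (N : ℝ)⁻¹
  have hN0 : (N : ℝ) ≠ 0 := by positivity
  have hρ0 : 0 ≤ ρ := by positivity
  have hρ1 : ρ ≤ 1 := inv_le_one_of_one_le₀ (by exact_mod_cast (by omega : 1 ≤ N))
  have hterm (p q : Fin 4 → Fin N) (hpq : ¬Disjoint (univ.image p) (univ.image q)) :
      |kphi N (p 0) (p 1) (p 2) (p 3)| * |kphi N (q 0) (q 1) (q 2) (q 3)|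
        ≤ 256 * N * ρ ^ #(univ.image p ∪ univ.image q) :=
    calc _ ≤ (16 * N * ρ ^ #(univ.image p)) * (16 * N * ρ ^ #(univ.image q)) :=
          mul_le_mul (abs_kphi_fin_four_le hN p) (abs_kphi_fin_four_le hN q) (abs_nonneg _)
            (by positivity)
      _ = 256 * N * (N * ρ ^ (#(univ.image p) + #(univ.image q))) := by ring
      _ ≤ 256 * N * (N * (ρ * ρ ^ #(univ.image p ∪ univ.image q))) := by
          gcongr
          exact pow_card_add_card_le_of_not_disjoint hρ0 hρ1 hpq
      _ = 256 * N * ρ ^ #(univ.image p ∪ univ.image q) := by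
          rw [← mul_assoc (N : ℝ), mul_inv_cancel₀ hN0, one_mul]
  have hinner (p : Fin 4 → Fin N) :
      ∑ q : Fin 4 → Fin N, ρ ^ #(univ.image p ∪ univ.image q) ≤ 8 ^ 4 * ρ ^ #(univ.image p) := by
    have hcard : (#(univ.image p) : ℝ) ≤ 4 := by
      exact_mod_cast (card_image_le.trans (by simp) : #(univ.image p) ≤ 4)
    calc _ ≤ ρ ^ #(univ.image p) * (#(univ.image p) + 4) ^ 4 := by
          simpa [ρ] using sum_inv_card_pow_card_union_image_le (univ.image p) 4
      _ ≤ ρ ^ #(univ.image p) * 8 ^ 4 := by gcongr; linarith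
      _ = _ := mul_comm _ _
  have houter : ∑ p : Fin 4 → Fin N, ρ ^ #(univ.image p) ≤ 4 ^ 4 := by
    simpa [ρ] using sum_inv_card_pow_card_union_image_le (∅ : Finset (Fin N)) 4
  calc _ ≤ ∑ p : Fin 4 → Fin N, ∑ q : Fin 4 → Fin N with ¬Disjoint (univ.image p) (univ.image q),
        256 * N * ρ ^ #(univ.image p ∪ univ.image q) :=
        sum_le_sum fun p _ => sum_le_sum fun q hq => hterm p q (mem_filter.mp hq).2
    _ ≤ ∑ p : Fin 4 → Fin N, ∑ q : Fin 4 → Fin N, 256 * N * ρ ^ #(univ.image p ∪ univ.image q) :=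
        sum_le_sum fun p _ => sum_le_sum_of_subset_of_nonneg (filter_subset _ _)
          fun _ _ _ => by positivity
    _ = 256 * N * ∑ p : Fin 4 → Fin N, ∑ q : Fin 4 → Fin N,
          ρ ^ #(univ.image p ∪ univ.image q) := by
        simp_rw [mul_sum]
    _ ≤ 256 * N * ∑ p : Fin 4 → Fin N, 8 ^ 4 * ρ ^ #(univ.image p) := by
        gcongr with p
        exact hinner p
    _ ≤ 256 * N * (8 ^ 4 * 4 ^ 4) := by
        rw [← mul_sum]
        gcongr
    _ = 2 ^ 28 * N := by ring

lemma kstat_eq_sum_pi (y : Fin 4 → Fin N → ℝ) :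
    kstat (y 0) (y 1) (y 2) (y 3)
      = 1 / N * ∑ p : Fin 4 → Fin N, kphi N (p 0) (p 1) (p 2) (p 3) * ∏ m, y m (p m) := by
  simp only [kstat, sum_fin_succ_pi, Fintype.sum_unique, Fin.prod_univ_four, mul_assoc]
  rfl

end KStatWeights

section Covariance

variable {Ω : Type*} [MeasurableSpace Ω] {μ : Measure Ω} [IsFiniteMeasure μ]

lemma abs_covariance_le_variance_add_variance_div_two {X Y : Ω → ℝ} (hX : MemLp X 2 μ)
    (hY : MemLp Y 2 μ) : |cov[X, Y; μ]| ≤ (Var[X; μ] + Var[Y; μ]) / 2 := by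
  have hadd := variance_add hX hY
  have hsub := variance_sub hX hY
  have := variance_nonneg (X + Y) μ
  have := variance_nonneg (X - Y) μ
  rw [abs_le]
  constructor <;> linarith

theorem variance_sum_le_of_covariance_eq_zero {ι : Type*} [Fintype ι] {Y : ι → Ω → ℝ} {M : ℝ}
    (R : ι → ι → Prop) [DecidableRel R] (c : ι → ℝ) (hY : ∀ i, MemLp (Y i) 2 μ)
    (hM : ∀ i, Var[Y i; μ] ≤ M) (hR : ∀ i j, ¬R i j → cov[Y i, Y j; μ] = 0) :
    Var[fun ω => ∑ i, c i * Y i ω; μ] ≤ M * ∑ i, ∑ j with R i j, |c i| * |c j| := by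
  have hterm (i j : ι) : cov[fun ω => c i * Y i ω, fun ω => c j * Y j ω; μ]
      ≤ if R i j then M * (|c i| * |c j|) else 0 := by
    rw [covariance_const_mul_left, covariance_const_mul_right]
    split_ifs with h
    · have hcov := abs_covariance_le_variance_add_variance_div_two (hY i) (hY j)
      calc c i * (c j * cov[Y i, Y j; μ]) ≤ |c i| * |c j| * |cov[Y i, Y j; μ]| := by
            rw [← abs_mul, ← abs_mul, ← mul_assoc]
            exact le_abs_self _
        _ ≤ |c i| * |c j| * M := by
            gcongr
            linarith [hM i, hM j]
        _ = M * (|c i| * |c j|) := mul_comm _ _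
    · rw [hR i j h, mul_zero, mul_zero]
  rw [variance_fun_sum fun i => (hY i).const_mul (c i), mul_sum]
  gcongr with i
  rw [mul_sum, sum_filter]
  gcongr with j
  exact hterm i j

end Covariance

section Sample

variable {Ω ι κ : Type*} [MeasurableSpace Ω] {μ : Measure Ω} [Fintype κ] {n : ℕ}
  {z : ι → Ω → Fin n → ℝ}

def sampleProd (z : ι → Ω → Fin n → ℝ) (c : κ → Fin n) (p : κ → ι) (ω : Ω) : ℝ :=
  ∏ m, z (p m) ω (c m)

lemma measurable_sampleProd (hz : ∀ r, Measurable (z r)) (c : κ → Fin n) (p : κ → ι) :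
    Measurable (sampleProd z c p) := by
  unfold sampleProd
  fun_prop

lemma indepFun_sampleProd_of_disjoint [DecidableEq ι] (hz : ∀ r, Measurable (z r))
    (hind : iIndepFun z μ) (c : κ → Fin n) {p q : κ → ι}
    (hpq : Disjoint (univ.image p) (univ.image q)) :
    IndepFun (sampleProd z c p) (sampleProd z c q) μ := by
  have hg (p : κ → ι) : Measurable fun v : univ.image p → Fin n → ℝ =>
      ∏ m, v ⟨p m, mem_image_of_mem p (mem_univ m)⟩ (c m) := by
    fun_prop
  exact (hind.indepFun_finset _ _ hpq hz).comp (hg p) (hg q)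

lemma sq_prod_fin_four_le (x : Fin 4 → ℝ) : (∏ m, x m) ^ 2 ≤ (∑ m, x m ^ 8) / 4 := by
  simp only [Fin.prod_univ_four, Fin.sum_univ_four]
  nlinarith [sq_nonneg (x 0 ^ 4 - x 1 ^ 4), sq_nonneg (x 2 ^ 4 - x 3 ^ 4),
    sq_nonneg (x 0 ^ 2 * x 1 ^ 2 - x 2 ^ 2 * x 3 ^ 2)]

variable (c : Fin 4 → Fin n) (p : Fin 4 → ι)

lemma integrable_sum_sample_pow_eight (h8 : ∀ r j, Integrable (fun ω => z r ω j ^ 8) μ) :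
    Integrable (fun ω => (∑ m, z (p m) ω (c m) ^ 8) / 4) μ :=
  (integrable_finsetSum univ fun m _ => h8 (p m) (c m)).div_const 4

lemma integrable_sampleProd_sq (h8 : ∀ r j, Integrable (fun ω => z r ω j ^ 8) μ)
    (hz : ∀ r, Measurable (z r)) : Integrable (fun ω => sampleProd z c p ω ^ 2) μ := by
  refine (integrable_sum_sample_pow_eight c p h8).mono'
    ((measurable_sampleProd hz c p).pow_const 2).aestronglyMeasurable (ae_of_all _ fun ω => ?_)
  rw [Real.norm_of_nonneg (sq_nonneg _)]
  exact sq_prod_fin_four_le _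

lemma memLp_two_sampleProd (h8 : ∀ r j, Integrable (fun ω => z r ω j ^ 8) μ)
    (hz : ∀ r, Measurable (z r)) : MemLp (sampleProd z c p) 2 μ :=
  (memLp_two_iff_integrable_sq (measurable_sampleProd hz c p).aestronglyMeasurable).mpr
    (integrable_sampleProd_sq c p h8 hz)

lemma variance_sampleProd_le [IsProbabilityMeasure μ]
    (h8 : ∀ r j, Integrable (fun ω => z r ω j ^ 8) μ) (hz : ∀ r, Measurable (z r)) {M : ℝ}
    (hM : ∀ r j, ∫ ω, z r ω j ^ 8 ∂μ ≤ M) : Var[sampleProd z c p; μ] ≤ M :=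
  calc Var[sampleProd z c p; μ] ≤ ∫ ω, sampleProd z c p ω ^ 2 ∂μ :=
        variance_le_expectation_sq (measurable_sampleProd hz c p).aestronglyMeasurable
    _ ≤ ∫ ω, (∑ m, z (p m) ω (c m) ^ 8) / 4 ∂μ :=
        integral_mono (integrable_sampleProd_sq c p h8 hz)
          (integrable_sum_sample_pow_eight c p h8)
          fun ω => sq_prod_fin_four_le _
    _ = (∑ m, ∫ ω, z (p m) ω (c m) ^ 8 ∂μ) / 4 := by
        rw [integral_div, integral_finsetSum univ fun m _ => h8 (p m) (c m)]
    _ ≤ (∑ _m : Fin 4, M) / 4 := by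
        gcongr with m
        exact hM _ _
    _ = M := by simp

end Sample

theorem variance_kstat_le {Ω : Type*} [MeasurableSpace Ω] {μ : Measure Ω} [IsProbabilityMeasure μ]
    {n N : ℕ} (hN : 8 ≤ N) {z : Fin N → Ω → Fin n → ℝ} (hz : ∀ r, Measurable (z r))
    (hind : iIndepFun z μ) (h8 : ∀ r j, Integrable (fun ω => z r ω j ^ 8) μ) {M : ℝ}
    (hM : ∀ r j, ∫ ω, z r ω j ^ 8 ∂μ ≤ M) (i j k l : Fin n) :
    Var[fun ω => kstat (fun r => z r ω i) (fun r => z r ω j) (fun r => z r ω k)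
      (fun r => z r ω l); μ] ≤ 2 ^ 28 * M / N := by
  have hM0 : 0 ≤ M := (integral_nonneg fun ω => by positivity).trans (hM ⟨0, by omega⟩ i)
  set c : Fin 4 → Fin n := ![i, j, k, l]
  have hkstat : (fun ω => kstat (fun r => z r ω i) (fun r => z r ω j) (fun r => z r ω k)
      (fun r => z r ω l)) = fun ω => 1 / N * ∑ p : Fin 4 → Fin N,
        kphi N (p 0) (p 1) (p 2) (p 3) * sampleProd z c p ω :=
    funext fun ω => kstat_eq_sum_pi fun m r => z r ω (c m)
  rw [hkstat, variance_const_mul]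
  calc (1 / N : ℝ) ^ 2 * Var[fun ω => ∑ p : Fin 4 → Fin N,
        kphi N (p 0) (p 1) (p 2) (p 3) * sampleProd z c p ω; μ]
      ≤ (1 / N : ℝ) ^ 2 * (M * ∑ p : Fin 4 → Fin N,
          ∑ q : Fin 4 → Fin N with ¬Disjoint (univ.image p) (univ.image q),
            |kphi N (p 0) (p 1) (p 2) (p 3)| * |kphi N (q 0) (q 1) (q 2) (q 3)|) := by
        gcongr
        exact variance_sum_le_of_covariance_eq_zero _ _ (memLp_two_sampleProd c · h8 hz)
          (variance_sampleProd_le c · h8 hz hM) fun p q hpq =>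
            (indepFun_sampleProd_of_disjoint hz hind c (not_not.mp hpq)).covariance_eq_zero
              (memLp_two_sampleProd c p h8 hz) (memLp_two_sampleProd c q h8 hz)
    _ ≤ (1 / N : ℝ) ^ 2 * (M * (2 ^ 28 * N)) := by
        gcongr
        exact sum_abs_kphi_mul_abs_kphi_of_not_disjoint_le hN
    _ = 2 ^ 28 * M / N := by
        field_simp

/-- there is a universal constant $C > 0$ such that for any
i.i.d. sample of size $N ≥ 8$ of a zero-mean random vector $Z$ with finite
eighth moments, the variance of each entry of the fourth k-statistic tensor
is at most $C ⋅ \max_q E[Z_q^8] / N$. -/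
theorem kstat_variance_bound :
    ∃ C : ℝ, 0 < C ∧
      ∀ {Ω : Type} [MeasurableSpace Ω] (μ : Measure Ω) [IsProbabilityMeasure μ]
        {n N : ℕ}, 8 ≤ N →
        ∀ (Z : Ω → Fin n → ℝ), Measurable Z →
        (∀ q, MemLp (fun ω => Z ω q) 8 μ) →
        (∀ q, ∫ ω, Z ω q ∂μ = 0) →
        ∀ (z : Fin N → Ω → Fin n → ℝ), (∀ r, Measurable (z r)) →
        (∀ r, Measure.map (z r) μ = Measure.map Z μ) →
        iIndepFun z μ →
        ∀ i j k l : Fin n,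
          variance (fun ω => kstat (fun r => z r ω i) (fun r => z r ω j)
              (fun r => z r ω k) (fun r => z r ω l)) μ
            ≤ C * (⨆ q : Fin n, ∫ ω, (Z ω q) ^ 8 ∂μ) / N := by
  refine ⟨2 ^ 28, by positivity, ?_⟩
  intro Ω _ μ _ n N hN Z hZ hZ8 _ z hz hzZ hind i j k l
  have hid (r : Fin N) (q : Fin n) :
      IdentDistrib (fun ω => z r ω q ^ 8) (fun ω => Z ω q ^ 8) μ μ :=
    (IdentDistrib.comp ⟨(hz r).aemeasurable, hZ.aemeasurable, hzZ r⟩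
      (measurable_pi_apply q)).pow
  have h8 (r : Fin N) (q : Fin n) : Integrable (fun ω => z r ω q ^ 8) μ :=
    (hid r q).integrable_iff.mpr <| by
      simpa [Even.pow_abs (by decide : Even 8)] using (hZ8 q).integrable_norm_pow (by norm_num)
  have hM (r : Fin N) (q : Fin n) : ∫ ω, z r ω q ^ 8 ∂μ ≤ ⨆ q, ∫ ω, Z ω q ^ 8 ∂μ := by
    rw [(hid r q).integral_eq]
    exact le_ciSup (Set.finite_range fun q => ∫ ω, Z ω q ^ 8 ∂μ).bddAbove q
  exact variance_kstat_le hN hz hind h8 hM i j k l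
end
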